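/- Let N ≥ 1, 2 + 4/N < p, q, μ_1, μ_2, β > 0, a, b > 0. Suppose (u_n, v_n) is a sequence in H^1(ℝ^N)² with |u_n|₂² = a, |v_n|₂² = b, P(u_n,v_n) = 0, and J(u_n,v_n) → m for some m ∈ ℝ. Then (u_n,v_n) is bounded in H^1 × H^1. -/

import Mathlib

/-! On the Pohozaev set the kinetic energy `A + B` equals `μ₁ γ_p |u|_p^p + μ₂ γ_q |v|_q^q`, and
`μ₁/p |u|_p^p = 2/(N(p-2)) · μ₁ γ_p |u|_p^p`. Hence the nonlinear terms of `J` cost at most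
`c (A + B)` with `c = 2/(N(min p q - 2)) < 1/2`, while the coupling term is bounded by the masses:
`∫ u v ≤ (a + b)/2`. So `(1/2 - c)(A + B) ≤ J + β(a + b)/2`, which is bounded along a convergent
sequence of energies. -/

open MeasureTheory Filter

theorem integral_mul_le_half_add_sq {α : Type*} [MeasurableSpace α] {μ : Measure α}
    {f g : α → ℝ} (hf : MemLp f 2 μ) (hg : MemLp g 2 μ) :
    ∫ x, f x * g x ∂μ ≤ ((∫ x, f x ^ 2 ∂μ) + ∫ x, g x ^ 2 ∂μ) / 2 := by
  have hf2 := hf.integrable_sq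
  have hg2 := hg.integrable_sq
  calc ∫ x, f x * g x ∂μ ≤ ∫ x, (f x ^ 2 + g x ^ 2) / 2 ∂μ :=
        integral_mono (hf.integrable_mul hg) ((hf2.add hg2).div_const 2) fun x => by
          linarith [two_mul_le_add_sq (f x) (g x)]
    _ = ((∫ x, f x ^ 2 ∂μ) + ∫ x, g x ^ 2 ∂μ) / 2 := by
        rw [integral_div, integral_add hf2 hg2]

theorem two_div_mul_sub_two_lt_half {N r : ℝ} (hN : 0 < N) (hr : 2 + 4 / N < r) :
    2 / (N * (r - 2)) < 1 / 2 := by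
  have h4 : 4 < N * (r - 2) := by
    rw [add_comm, ← lt_sub_iff_add_lt, div_lt_iff₀ hN] at hr
    linarith
  rw [div_lt_div_iff₀ (by linarith) two_pos]
  linarith

theorem div_mul_le_two_div_mul_gamma {N r p γ μ U : ℝ} (hN : 0 < N) (hr : 2 < r) (hrp : r ≤ p)
    (hγ : γ = N * (p - 2) / (2 * p)) (hμU : 0 ≤ μ * U) :
    μ / p * U ≤ 2 / (N * (r - 2)) * (μ * γ * U) := by
  have hp : p - 2 ≠ 0 := by linarith
  have hγ₀ : 0 ≤ γ := hγ ▸ div_nonneg (mul_nonneg hN.le (by linarith)) (by linarith)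
  calc μ / p * U = 2 / (N * (p - 2)) * (μ * γ * U) := by subst hγ; field_simp
    _ ≤ 2 / (N * (r - 2)) * (μ * γ * U) := by
        have : 0 ≤ μ * γ * U := by rw [mul_right_comm]; exact mul_nonneg hμU hγ₀
        gcongr

theorem energy_ge_of_pohozaev {N p q γp γq μ₁ μ₂ A B U V : ℝ} (hN : 0 < N) (hp : 2 < p)
    (hq : 2 < q) (hγp : γp = N * (p - 2) / (2 * p)) (hγq : γq = N * (q - 2) / (2 * q))
    (hμ₁U : 0 ≤ μ₁ * U) (hμ₂V : 0 ≤ μ₂ * V)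
    (hP : A + B - μ₁ * γp * U - μ₂ * γq * V = 0) :
    (1 / 2 - 2 / (N * (min p q - 2))) * (A + B) ≤ 1 / 2 * (A + B) - μ₁ / p * U - μ₂ / q * V := by
  have hU := div_mul_le_two_div_mul_gamma hN (lt_min hp hq) (min_le_left p q) hγp hμ₁U
  have hV := div_mul_le_two_div_mul_gamma hN (lt_min hp hq) (min_le_right p q) hγq hμ₂V
  have hAB : A + B = μ₁ * γp * U + μ₂ * γq * V := by linarith
  rw [hAB]
  linarith

theorem PS_sequence_bounded_general
    (N : ℕ) (hN : 1 ≤ N) (p q μ₁ μ₂ β a b m : ℝ)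
    (hp : 2 + 4 / N < p) (hq : 2 + 4 / N < q)
    (hμ₁ : 0 < μ₁) (hμ₂ : 0 < μ₂) (hβ : 0 < β)
    (γp γq : ℝ) (hγp : γp = N * (p - 2) / (2 * p)) (hγq : γq = N * (q - 2) / (2 * q))
    (u v : ℕ → EuclideanSpace ℝ (Fin N) → ℝ)
    (hu : ∀ n, MemLp (u n) 2 volume) (hv : ∀ n, MemLp (v n) 2 volume)
    (hua : ∀ n, (∫ x, |u n x| ^ 2) = a) (hvb : ∀ n, (∫ x, |v n x| ^ 2) = b)
    -- P(u_n, v_n) = 0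
    (hP : ∀ n, (∫ x, ‖fderiv ℝ (u n) x‖ ^ 2) + (∫ x, ‖fderiv ℝ (v n) x‖ ^ 2)
        - μ₁ * γp * (∫ x, |u n x| ^ p) - μ₂ * γq * (∫ x, |v n x| ^ q) = 0)
    -- J(u_n, v_n) → m
    (hJ : Tendsto (fun n =>
        (1 / 2 : ℝ) * ((∫ x, ‖fderiv ℝ (u n) x‖ ^ 2) + (∫ x, ‖fderiv ℝ (v n) x‖ ^ 2))
          - μ₁ / p * (∫ x, |u n x| ^ p) - μ₂ / q * (∫ x, |v n x| ^ q)
          - β * (∫ x, u n x * v n x)) atTop (nhds m)) :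
    ∃ M : ℝ, ∀ n,
      (∫ x, ‖fderiv ℝ (u n) x‖ ^ 2) + (∫ x, |u n x| ^ 2) +
        (∫ x, ‖fderiv ℝ (v n) x‖ ^ 2) + (∫ x, |v n x| ^ 2) ≤ M := by
  have hN₀ : (0 : ℝ) < N := by exact_mod_cast hN
  have hp₂ : 2 < p := by linarith [show 0 < 4 / (N : ℝ) by positivity]
  have hq₂ : 2 < q := by linarith [show 0 < 4 / (N : ℝ) by positivity]
  have hc : 2 / (N * (min p q - 2)) < 1 / 2 := two_div_mul_sub_two_lt_half hN₀ (lt_min hp hq)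
  obtain ⟨M₀, hM₀⟩ := hJ.bddAbove_range
  refine ⟨(M₀ + β * ((a + b) / 2)) / (1 / 2 - 2 / (N * (min p q - 2))) + a + b, fun n => ?_⟩
  have hmass : (∫ x, u n x ^ 2) + (∫ x, v n x ^ 2) = a + b := by
    simpa only [sq_abs] using congrArg₂ (· + ·) (hua n) (hvb n)
  have hcoupling := hmass ▸ integral_mul_le_half_add_sq (hu n) (hv n)
  rw [hua n, hvb n]
  have hlow := energy_ge_of_pohozaev hN₀ hp₂ hq₂ hγp hγq
    (mul_nonneg hμ₁.le (integral_nonneg fun x => by positivity))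
    (mul_nonneg hμ₂.le (integral_nonneg fun x => by positivity)) (hP n)
  have hkinetic : (1 / 2 - 2 / (N * (min p q - 2))) *
      ((∫ x, ‖fderiv ℝ (u n) x‖ ^ 2) + ∫ x, ‖fderiv ℝ (v n) x‖ ^ 2) ≤ M₀ + β * ((a + b) / 2) := by
    linarith [hM₀ ⟨n, rfl⟩, mul_le_mul_of_nonneg_left hcoupling hβ.le]
  linarith [(le_div_iff₀' (sub_pos.2 hc)).2 hkinetic]

theorem PS_sequence_bounded
    (N : ℕ) (hN : 1 ≤ N) (p q μ₁ μ₂ β a b m : ℝ)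
    (hp : 2 + 4 / N < p) (hq : 2 + 4 / N < q)
    (hμ₁ : 0 < μ₁) (hμ₂ : 0 < μ₂) (hβ : 0 < β) (ha : 0 < a) (hb : 0 < b)
    (γp γq : ℝ) (hγp : γp = N * (p - 2) / (2 * p)) (hγq : γq = N * (q - 2) / (2 * q))
    (u v : ℕ → EuclideanSpace ℝ (Fin N) → ℝ)
    (hu : ∀ n, MemLp (u n) 2 volume) (hv : ∀ n, MemLp (v n) 2 volume)
    (hua : ∀ n, (∫ x, |u n x| ^ 2) = a) (hvb : ∀ n, (∫ x, |v n x| ^ 2) = b)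
    -- P(u_n, v_n) = 0
    (hP : ∀ n, (∫ x, ‖fderiv ℝ (u n) x‖ ^ 2) + (∫ x, ‖fderiv ℝ (v n) x‖ ^ 2)
        - μ₁ * γp * (∫ x, |u n x| ^ p) - μ₂ * γq * (∫ x, |v n x| ^ q) = 0)
    -- J(u_n, v_n) → m
    (hJ : Tendsto (fun n =>
        (1 / 2 : ℝ) * ((∫ x, ‖fderiv ℝ (u n) x‖ ^ 2) + (∫ x, ‖fderiv ℝ (v n) x‖ ^ 2))
          - μ₁ / p * (∫ x, |u n x| ^ p) - μ₂ / q * (∫ x, |v n x| ^ q)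
          - β * (∫ x, u n x * v n x)) atTop (nhds m)) :
    ∃ M : ℝ, ∀ n,
      (∫ x, ‖fderiv ℝ (u n) x‖ ^ 2) + (∫ x, |u n x| ^ 2) +
        (∫ x, ‖fderiv ℝ (v n) x‖ ^ 2) + (∫ x, |v n x| ^ 2) ≤ M :=
  PS_sequence_bounded_general N hN p q μ₁ μ₂ β a b m hp hq hμ₁ hμ₂ hβ γp γq hγp hγq u v hu hv hua
    hvb hP hJ
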